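/- If y ∈ s_{n+1} is regular semi-simple and B ⊂ GL_n(ℝ) is the upper triangular subgroup, then the stabilizer of y in B is trivial and the orbit map B → s_{n+1}, b ↦ b·y (action via diag(b,1)-conjugation) is injective with Zariski-closed image. -/

import Mathlib

open Matrix MeasureTheory

noncomputable section

/-- The space `s_{n+1} = {y ∈ M_{n+1}(ℂ) | y + ȳ = 0}` (entrywise conjugation). -/
def sSet (n : ℕ) : Set (Matrix (Fin (n+1)) (Fin (n+1)) ℂ) :=
  {y | y + y.map (starRingEnd ℂ) = 0}

/-- The embedding `g ↦ diag(g, 1)` of `n×n` matrices into `(n+1)×(n+1)` matrices. -/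
def dgC {n : ℕ} (g : Matrix (Fin n) (Fin n) ℂ) : Matrix (Fin (n+1)) (Fin (n+1)) ℂ :=
  Matrix.reindex finSumFinEquiv finSumFinEquiv
    (Matrix.fromBlocks g 0 0 (1 : Matrix (Fin 1) (Fin 1) ℂ))

/-- The real version of `diag(H, 1)`. -/
def dgR {n : ℕ} (H : Matrix (Fin n) (Fin n) ℝ) : Matrix (Fin (n+1)) (Fin (n+1)) ℝ :=
  Matrix.reindex finSumFinEquiv finSumFinEquiv
    (Matrix.fromBlocks H 0 0 (1 : Matrix (Fin 1) (Fin 1) ℝ))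

/-- The action of `GL_n(ℝ)` on `(n+1)×(n+1)` complex matrices:
`g · y = diag(g,1) y diag(g,1)⁻¹`. -/
def mact {n : ℕ} (g : GL (Fin n) ℝ) (y : Matrix (Fin (n+1)) (Fin (n+1)) ℂ) :
    Matrix (Fin (n+1)) (Fin (n+1)) ℂ :=
  dgC (((g : Matrix (Fin n) (Fin n) ℝ)).map (fun r : ℝ => (r : ℂ))) * y *
    dgC ((((g⁻¹ : GL (Fin n) ℝ) : Matrix (Fin n) (Fin n) ℝ)).map (fun r : ℝ => (r : ℂ)))

/-- The upper-left `n×n` block `y₀` of `y`. -/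
def blk0 {n : ℕ} (y : Matrix (Fin (n+1)) (Fin (n+1)) ℂ) : Matrix (Fin n) (Fin n) ℂ :=
  Matrix.of fun i j => y i.castSucc j.castSucc

/-- The last-column block `v` of `y` (a column vector). -/
def blkv {n : ℕ} (y : Matrix (Fin (n+1)) (Fin (n+1)) ℂ) : Fin n → ℂ :=
  fun i => y i.castSucc (Fin.last n)

/-- The last-row block `w` of `y` (a row vector). -/
def blkw {n : ℕ} (y : Matrix (Fin (n+1)) (Fin (n+1)) ℂ) : Fin n → ℂ :=
  fun j => y (Fin.last n) j.castSucc

/-- The lower-right entry `d` of `y`. -/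
def blkd {n : ℕ} (y : Matrix (Fin (n+1)) (Fin (n+1)) ℂ) : ℂ :=
  y (Fin.last n) (Fin.last n)

/-- The spanning characterization of regular semi-simplicity:
`ℂ[y₀]·v = ℂⁿ` and `w·ℂ[y₀] = ℂ_n`. -/
def RSspan {n : ℕ} (y : Matrix (Fin (n+1)) (Fin (n+1)) ℂ) : Prop :=
  Submodule.span ℂ {u : Fin n → ℂ | ∃ k : ℕ, u = (blk0 y ^ k) *ᵥ blkv y} = ⊤ ∧
  Submodule.span ℂ {u : Fin n → ℂ | ∃ k : ℕ, u = blkw y ᵥ* (blk0 y ^ k)} = ⊤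

/-- The Jacquet–Rallis invariant `Inv(y) = (char(y₀;T), w v, w y₀ v, …, w y₀^{n-1} v, d)`. -/
def InvS {n : ℕ} (y : Matrix (Fin (n+1)) (Fin (n+1)) ℂ) :
    Polynomial ℂ × (Fin n → ℂ) × ℂ :=
  ((blk0 y).charpoly, fun k => blkw y ⬝ᵥ ((blk0 y ^ (k : ℕ)) *ᵥ blkv y), blkd y)

/-- The Lie algebra `u(n+1)` of the compact unitary group: `x* = -x`. -/
def uSet (n : ℕ) : Set (Matrix (Fin (n+1)) (Fin (n+1)) ℂ) :=
  {x | xᴴ = -x}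

/-- Regular semi-simplicity on the unitary side: `ℂ[x₀]·u = ℂⁿ`. -/
def RSspanU {n : ℕ} (x : Matrix (Fin (n+1)) (Fin (n+1)) ℂ) : Prop :=
  Submodule.span ℂ {u : Fin n → ℂ | ∃ k : ℕ, u = (blk0 x ^ k) *ᵥ blkv x} = ⊤

/-- The invariant on the unitary side,
`Inv(x) = (char(x₀;T), -(u,u), …, -(u, x₀^{n-1} u), d)`, with the standard
positive definite hermitian form `(a,b) = star a ⬝ᵥ b`. -/
def InvU {n : ℕ} (x : Matrix (Fin (n+1)) (Fin (n+1)) ℂ) :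
    Polynomial ℂ × (Fin n → ℂ) × ℂ :=
  ((blk0 x).charpoly,
   fun k => -(star (blkv x) ⬝ᵥ ((blk0 x ^ (k : ℕ)) *ᵥ blkv x)),
   blkd x)

/-- `y` matches to signature `(n,0)`: there is a matching regular semi-simple element
of `u(n+1)` (the positive definite case). -/
def MatchesN0 {n : ℕ} (y : Matrix (Fin (n+1)) (Fin (n+1)) ℂ) : Prop :=
  ∃ x ∈ uSet n, RSspanU x ∧ InvS y = InvU x

/-- The real "arrow" matrix with diagonal `(λ₁,…,λₙ,d)` and last row/column `μ₁,…,μₙ`. -/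
def arrow {n : ℕ} (lam mu : Fin n → ℝ) (d : ℝ) : Matrix (Fin (n+1)) (Fin (n+1)) ℝ :=
  Matrix.reindex finSumFinEquiv finSumFinEquiv
    (Matrix.fromBlocks (Matrix.diagonal lam)
      (Matrix.of fun i (_ : Fin 1) => mu i)
      (Matrix.of fun (_ : Fin 1) j => mu j)
      (Matrix.of fun _ _ => d))

/-- `i·A` for a real matrix `A`, viewed inside `M_{n+1}(ℂ)`. -/
def iM {n : ℕ} (A : Matrix (Fin (n+1)) (Fin (n+1)) ℝ) : Matrix (Fin (n+1)) (Fin (n+1)) ℂ :=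
  Complex.I • (A.map fun r : ℝ => (r : ℂ))

/-- The element `i·M` of `s_{n+1}` attached to arrow data. -/
def iArrow {n : ℕ} (lam mu : Fin n → ℝ) (d : ℝ) : Matrix (Fin (n+1)) (Fin (n+1)) ℂ :=
  iM (arrow lam mu d)

/-- A real-valued polynomial function on a real vector space: an element of the
subalgebra of functions generated by the linear functionals. -/
def IsPolyFun {V : Type*} [AddCommGroup V] [Module ℝ V] (f : V → ℝ) : Prop :=
  f ∈ Algebra.adjoin ℝ (Set.range fun l : V →ₗ[ℝ] ℝ => ⇑l)

/-- Zariski-closed subsets of a real vector space: common zero loci of families of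
polynomial functions. -/
def IsRZClosed {V : Type*} [AddCommGroup V] [Module ℝ V] (s : Set V) : Prop :=
  ∃ T : Set (V → ℝ), (∀ f ∈ T, IsPolyFun f) ∧ s = {x | ∀ f ∈ T, f x = 0}

/-- Regular semi-simplicity as defined in the paper: trivial `GL_n(ℝ)`-stabilizer
and Zariski-closed orbit. -/
def RSdef {n : ℕ} (y : Matrix (Fin (n+1)) (Fin (n+1)) ℂ) : Prop :=
  (∀ g : GL (Fin n) ℝ, mact g y = y → g = 1) ∧
  IsRZClosed {z | ∃ g : GL (Fin n) ℝ, z = mact g y}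

/-- The set `𝔖` of regular semi-simple elements of `s_{n+1}` matching signature `(n,0)`. -/
def frakS (n : ℕ) : Set (Matrix (Fin (n+1)) (Fin (n+1)) ℂ) :=
  {y | y ∈ sSet n ∧ RSspan y ∧ MatchesN0 y}


/-- The upper triangular subgroup `B ⊂ GL_n(ℝ)` (as a subset). -/
def BSub (n : ℕ) : Set (GL (Fin n) ℝ) :=
  {g | ((g : Matrix (Fin n) (Fin n) ℝ)).BlockTriangular id}

/-! ### Auxiliary machinery for Statement 19 -/

namespace Stmt19Aux

open Matrix Complex

variable {n : ℕ}

/-- Real-to-complex entrywise matrix map. -/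
def ι {m k : Type*} (M : Matrix m k ℝ) : Matrix m k ℂ := M.map (fun r : ℝ => (r : ℂ))

lemma ι_mul (A B : Matrix (Fin n) (Fin n) ℝ) : ι (A * B) = ι A * ι B :=
  Matrix.map_mul (f := Complex.ofRealHom)

lemma ι_one : ι (1 : Matrix (Fin n) (Fin n) ℝ) = 1 :=
  Matrix.map_one _ (map_zero Complex.ofRealHom) (map_one Complex.ofRealHom)

lemma ι_zero {m k : Type*} : ι (0 : Matrix m k ℝ) = 0 := by
  ext i j; simp [ι]

lemma ι_add {m k : Type*} (A B : Matrix m k ℝ) : ι (A + B) = ι A + ι B := by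
  ext i j; simp [ι]

lemma ι_smul {m k : Type*} (t : ℝ) (A : Matrix m k ℝ) : ι (t • A) = t • ι A := by
  ext i j; simp [ι, Complex.real_smul]

/-- Column, row, and corner 1×1 matrices. -/
def cMat (v : Fin n → ℂ) : Matrix (Fin n) (Fin 1) ℂ := Matrix.of fun i _ => v i

def rMat (w : Fin n → ℂ) : Matrix (Fin 1) (Fin n) ℂ := Matrix.of fun _ j => w j

def dMat (d : ℂ) : Matrix (Fin 1) (Fin 1) ℂ := Matrix.of fun _ _ => d

lemma symm_castSucc (i : Fin n) :
    finSumFinEquiv.symm (Fin.castSucc i) = Sum.inl i :=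
  finSumFinEquiv_symm_apply_castAdd i

lemma y_blocks (x : Matrix (Fin (n+1)) (Fin (n+1)) ℂ) :
    x = Matrix.reindex finSumFinEquiv finSumFinEquiv
      (Matrix.fromBlocks (blk0 x) (cMat (blkv x)) (rMat (blkw x)) (dMat (blkd x))) := by
  ext i j
  rw [Matrix.reindex_apply, Matrix.submatrix_apply]
  induction i using Fin.lastCases with
  | last =>
    induction j using Fin.lastCases with
    | last => simp [finSumFinEquiv_symm_last, blkd, dMat]
    | cast j => simp [finSumFinEquiv_symm_last, symm_castSucc, blkw, rMat]
  | cast i =>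
    induction j using Fin.lastCases with
    | last => simp [finSumFinEquiv_symm_last, symm_castSucc, blkv, cMat]
    | cast j => simp [symm_castSucc, blk0]

lemma blk0_reindex (A : Matrix (Fin n) (Fin n) ℂ) (B : Matrix (Fin n) (Fin 1) ℂ)
    (C : Matrix (Fin 1) (Fin n) ℂ) (D : Matrix (Fin 1) (Fin 1) ℂ) :
    blk0 (Matrix.reindex finSumFinEquiv finSumFinEquiv (Matrix.fromBlocks A B C D)) = A := by
  ext i j
  simp [blk0, Matrix.reindex_apply, Matrix.submatrix_apply, symm_castSucc]

lemma blkv_reindex (A : Matrix (Fin n) (Fin n) ℂ) (B : Matrix (Fin n) (Fin 1) ℂ)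
    (C : Matrix (Fin 1) (Fin n) ℂ) (D : Matrix (Fin 1) (Fin 1) ℂ) :
    blkv (Matrix.reindex finSumFinEquiv finSumFinEquiv (Matrix.fromBlocks A B C D))
      = fun i => B i 0 := by
  funext i
  simp [blkv, Matrix.reindex_apply, Matrix.submatrix_apply, symm_castSucc,
    finSumFinEquiv_symm_last]

lemma blkw_reindex (A : Matrix (Fin n) (Fin n) ℂ) (B : Matrix (Fin n) (Fin 1) ℂ)
    (C : Matrix (Fin 1) (Fin n) ℂ) (D : Matrix (Fin 1) (Fin 1) ℂ) :
    blkw (Matrix.reindex finSumFinEquiv finSumFinEquiv (Matrix.fromBlocks A B C D))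
      = fun j => C 0 j := by
  funext j
  simp [blkw, Matrix.reindex_apply, Matrix.submatrix_apply, symm_castSucc,
    finSumFinEquiv_symm_last]

lemma blkd_reindex (A : Matrix (Fin n) (Fin n) ℂ) (B : Matrix (Fin n) (Fin 1) ℂ)
    (C : Matrix (Fin 1) (Fin n) ℂ) (D : Matrix (Fin 1) (Fin 1) ℂ) :
    blkd (Matrix.reindex finSumFinEquiv finSumFinEquiv (Matrix.fromBlocks A B C D))
      = D 0 0 := by
  simp [blkd, Matrix.reindex_apply, Matrix.submatrix_apply, finSumFinEquiv_symm_last]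

lemma reindex_mul (M N : Matrix (Fin n ⊕ Fin 1) (Fin n ⊕ Fin 1) ℂ) :
    (Matrix.reindex finSumFinEquiv finSumFinEquiv M) *
      (Matrix.reindex finSumFinEquiv finSumFinEquiv N)
      = Matrix.reindex finSumFinEquiv finSumFinEquiv (M * N) := by
  simp [Matrix.reindex_apply]

lemma dgC_mul (A B : Matrix (Fin n) (Fin n) ℂ) : dgC A * dgC B = dgC (A * B) := by
  rw [dgC, dgC, dgC, reindex_mul, Matrix.fromBlocks_multiply]
  simp

lemma dgC_one : dgC (1 : Matrix (Fin n) (Fin n) ℂ) = 1 := by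
  rw [dgC, Matrix.fromBlocks_one]
  simp

lemma mact_eq (g : GL (Fin n) ℝ) (x : Matrix (Fin (n+1)) (Fin (n+1)) ℂ) :
    mact g x = dgC (ι (g : Matrix (Fin n) (Fin n) ℝ)) * x *
      dgC (ι ((g⁻¹ : GL (Fin n) ℝ) : Matrix (Fin n) (Fin n) ℝ)) := rfl

lemma mact_one (x : Matrix (Fin (n+1)) (Fin (n+1)) ℂ) : mact (1 : GL (Fin n) ℝ) x = x := by
  rw [mact_eq, inv_one]
  show dgC (ι ((1 : GL (Fin n) ℝ) : Matrix (Fin n) (Fin n) ℝ)) * x *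
    dgC (ι ((1 : GL (Fin n) ℝ) : Matrix (Fin n) (Fin n) ℝ)) = x
  rw [Units.val_one, ι_one, dgC_one, one_mul, mul_one]

lemma mact_mul (g h : GL (Fin n) ℝ) (x : Matrix (Fin (n+1)) (Fin (n+1)) ℂ) :
    mact (g * h) x = mact g (mact h x) := by
  rw [mact_eq, mact_eq, mact_eq]
  have h1 : ι ((g * h : GL (Fin n) ℝ) : Matrix (Fin n) (Fin n) ℝ)
      = ι (g : Matrix (Fin n) (Fin n) ℝ) * ι (h : Matrix (Fin n) (Fin n) ℝ) := by
    rw [Units.val_mul, ι_mul]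
  have h2 : ι (((g * h)⁻¹ : GL (Fin n) ℝ) : Matrix (Fin n) (Fin n) ℝ)
      = ι ((h⁻¹ : GL (Fin n) ℝ) : Matrix (Fin n) (Fin n) ℝ) *
        ι ((g⁻¹ : GL (Fin n) ℝ) : Matrix (Fin n) (Fin n) ℝ) := by
    rw [_root_.mul_inv_rev, Units.val_mul, ι_mul]
  rw [h1, h2, ← dgC_mul, ← dgC_mul]
  noncomm_ring

/-- The master block-decomposition of `dgC P * x * dgC Q`. -/
lemma dgC_mul_dgC (P Q : Matrix (Fin n) (Fin n) ℂ) (x : Matrix (Fin (n+1)) (Fin (n+1)) ℂ) :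
    dgC P * x * dgC Q = Matrix.reindex finSumFinEquiv finSumFinEquiv
      (Matrix.fromBlocks (P * blk0 x * Q) (P * cMat (blkv x))
        (rMat (blkw x) * Q) (dMat (blkd x))) := by
  conv_lhs => rw [y_blocks x]
  rw [dgC, dgC, reindex_mul, reindex_mul, Matrix.fromBlocks_multiply,
    Matrix.fromBlocks_multiply]
  congr 1
  congr 1 <;> simp [Matrix.mul_assoc]

lemma blk0_mact (g : GL (Fin n) ℝ) (x : Matrix (Fin (n+1)) (Fin (n+1)) ℂ) :
    blk0 (mact g x) = ι (g : Matrix (Fin n) (Fin n) ℝ) * blk0 x *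
      ι ((g⁻¹ : GL (Fin n) ℝ) : Matrix (Fin n) (Fin n) ℝ) := by
  rw [mact_eq, dgC_mul_dgC, blk0_reindex]

lemma blkv_mact (g : GL (Fin n) ℝ) (x : Matrix (Fin (n+1)) (Fin (n+1)) ℂ) :
    blkv (mact g x) = ι (g : Matrix (Fin n) (Fin n) ℝ) *ᵥ blkv x := by
  rw [mact_eq, dgC_mul_dgC, blkv_reindex]
  funext i
  simp [cMat, Matrix.mul_apply, Matrix.mulVec, dotProduct]

/-- Entrywise imaginary parts. -/
def imM {m k : Type*} (C : Matrix m k ℂ) : Matrix m k ℝ := Matrix.of fun i j => (C i j).im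

def imV (v : Fin n → ℂ) : Fin n → ℝ := fun i => (v i).im

lemma imM_conj (P Q : Matrix (Fin n) (Fin n) ℝ) (C : Matrix (Fin n) (Fin n) ℂ) :
    imM (ι P * C * ι Q) = P * imM C * Q := by
  ext i j
  simp only [imM, Matrix.of_apply, Matrix.mul_apply, ι, Matrix.map_apply,
    Finset.sum_mul, Complex.im_sum]
  refine Finset.sum_congr rfl fun l _ => Finset.sum_congr rfl fun k _ => ?_
  simp [Complex.mul_im]

lemma imV_mulVec (P : Matrix (Fin n) (Fin n) ℝ) (v : Fin n → ℂ) :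
    imV (ι P *ᵥ v) = P *ᵥ imV v := by
  funext i
  simp [imV, ι, Matrix.mulVec, dotProduct, Complex.im_sum, Complex.mul_im]

lemma entry_real {z : ℂ} (h : z + (starRingEnd ℂ) z = 0) :
    z = Complex.I * (z.im : ℂ) := by
  have h1 : z.re + z.re = 0 := by simpa using congrArg Complex.re h
  have hre : z.re = 0 := by linarith
  apply Complex.ext <;> simp [hre]

section PolyFun

variable {V : Type*} [AddCommGroup V] [Module ℝ V]

lemma isPolyFun_linear (l : V →ₗ[ℝ] ℝ) : IsPolyFun (⇑l) :=
  Algebra.subset_adjoin ⟨l, rfl⟩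

lemma isPolyFun_const (c : ℝ) : IsPolyFun (fun _ : V => c) := by
  have h : (fun _ : V => c) = algebraMap ℝ (V → ℝ) c := rfl
  rw [IsPolyFun, h]
  exact Subalgebra.algebraMap_mem _ c

lemma isPolyFun_add {f g : V → ℝ} (hf : IsPolyFun f) (hg : IsPolyFun g) :
    IsPolyFun (fun z => f z + g z) := add_mem hf hg

lemma isPolyFun_mul {f g : V → ℝ} (hf : IsPolyFun f) (hg : IsPolyFun g) :
    IsPolyFun (fun z => f z * g z) := mul_mem hf hg

lemma isPolyFun_mul_const {f : V → ℝ} (hf : IsPolyFun f) (c : ℝ) :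
    IsPolyFun (fun z => f z * c) := mul_mem hf (isPolyFun_const c)

lemma isPolyFun_sum {κ : Type*} (s : Finset κ) (F : κ → V → ℝ)
    (h : ∀ k ∈ s, IsPolyFun (F k)) : IsPolyFun (fun z => ∑ k ∈ s, F k z) := by
  have : (fun z => ∑ k ∈ s, F k z) = ∑ k ∈ s, F k := by
    funext z; simp
  rw [IsPolyFun, this]
  exact sum_mem h

/-- A polynomial function composed with an affine line is continuous. -/
lemma isPolyFun_line_continuous {f : V → ℝ} (hf : IsPolyFun f) (Z₀ Z₁ : V) :
    Continuous (fun s : ℝ => f (Z₀ + s • Z₁)) := by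
  refine Algebra.adjoin_induction ?_ ?_ ?_ ?_ hf
  · rintro x ⟨l, rfl⟩
    have : (fun s : ℝ => l (Z₀ + s • Z₁)) = fun s : ℝ => l Z₀ + s * l Z₁ := by
      funext s; rw [map_add, LinearMap.map_smul]; simp [smul_eq_mul]
    rw [this]
    exact continuous_const.add (continuous_id.mul continuous_const)
  · intro r
    exact continuous_const
  · intro x y _ _ hx hy
    exact hx.add hy
  · intro x y _ _ hx hy
    exact hx.mul hy

end PolyFun

lemma isPolyFun_im_entry (i j : Fin (n+1)) :
    IsPolyFun (fun z : Matrix (Fin (n+1)) (Fin (n+1)) ℂ => (z i j).im) :=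
  isPolyFun_linear (Complex.imLm ∘ₗ Matrix.entryLinearMap ℝ ℂ i j)

lemma isPolyFun_kry (k : ℕ) :
    ∀ i : Fin n, IsPolyFun (fun z : Matrix (Fin (n+1)) (Fin (n+1)) ℂ =>
      ((imM (blk0 z)) ^ k *ᵥ imV (blkv z)) i) := by
  induction k with
  | zero =>
    intro i
    simp only [pow_zero, Matrix.one_mulVec]
    exact isPolyFun_im_entry i.castSucc (Fin.last n)
  | succ k ih =>
    intro i
    have hrw : ∀ z : Matrix (Fin (n+1)) (Fin (n+1)) ℂ,
        ((imM (blk0 z)) ^ (k+1) *ᵥ imV (blkv z)) i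
          = ∑ j : Fin n, (z i.castSucc j.castSucc).im *
            ((imM (blk0 z)) ^ k *ᵥ imV (blkv z)) j := by
      intro z
      rw [pow_succ', ← Matrix.mulVec_mulVec]
      simp [Matrix.mulVec, dotProduct, imM, blk0]
    simp only [hrw]
    exact isPolyFun_sum Finset.univ _ fun j _ =>
      isPolyFun_mul (isPolyFun_im_entry i.castSucc j.castSucc) (ih j)

/-- The Krylov matrix of `(A₀, a)`. -/
def kry (z : Matrix (Fin (n+1)) (Fin (n+1)) ℂ) : Matrix (Fin n) (Fin n) ℝ :=
  Matrix.of fun i (k : Fin n) => ((imM (blk0 z)) ^ (k : ℕ) *ᵥ imV (blkv z)) i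

lemma kry_mact (g : GL (Fin n) ℝ) (x : Matrix (Fin (n+1)) (Fin (n+1)) ℂ) :
    kry (mact g x) = (g : Matrix (Fin n) (Fin n) ℝ) * kry x := by
  have hA : imM (blk0 (mact g x)) = (g : Matrix (Fin n) (Fin n) ℝ) * imM (blk0 x) *
      ((g⁻¹ : GL (Fin n) ℝ) : Matrix (Fin n) (Fin n) ℝ) := by
    rw [blk0_mact, imM_conj]
  have ha : imV (blkv (mact g x)) = (g : Matrix (Fin n) (Fin n) ℝ) *ᵥ imV (blkv x) := by
    rw [blkv_mact, imV_mulVec]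
  ext i k
  rw [kry, kry]
  simp only [Matrix.of_apply, hA, ha]
  rw [Units.conj_pow, Matrix.mulVec_mulVec,
    show ((g : Matrix (Fin n) (Fin n) ℝ) * imM (blk0 x) ^ (k : ℕ) *
        ((g⁻¹ : GL (Fin n) ℝ) : Matrix (Fin n) (Fin n) ℝ)) * (g : Matrix (Fin n) (Fin n) ℝ)
      = (g : Matrix (Fin n) (Fin n) ℝ) * imM (blk0 x) ^ (k : ℕ) by
    rw [Matrix.mul_assoc, Units.inv_mul, Matrix.mul_one],
    ← Matrix.mulVec_mulVec]
  simp [Matrix.mul_apply, Matrix.mulVec, dotProduct]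

lemma matrix_ext_mulVec {M N : Matrix (Fin n) (Fin n) ℝ}
    (h : ∀ x, M *ᵥ x = N *ᵥ x) : M = N := by
  have h2 : Matrix.toLin' M = Matrix.toLin' N := by
    apply LinearMap.ext
    intro x
    simpa [Matrix.toLin'_apply] using h x
  exact Matrix.toLin'.injective h2

lemma sum_mulVec {κ : Type*} (s : Finset κ) (M : κ → Matrix (Fin n) (Fin n) ℝ)
    (v : Fin n → ℝ) : (∑ k ∈ s, M k) *ᵥ v = ∑ k ∈ s, (M k) *ᵥ v := by
  classical
  induction s using Finset.induction_on with
  | empty => simp [Matrix.zero_mulVec]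
  | @insert a s h ih => rw [Finset.sum_insert h, Finset.sum_insert h, Matrix.add_mulVec, ih]

lemma kry_isUnit (y : Matrix (Fin (n+1)) (Fin (n+1)) ℂ)
    (hspan : Submodule.span ℝ
      (Set.range fun k : ℕ => (imM (blk0 y)) ^ k *ᵥ imV (blkv y)) = ⊤) :
    IsUnit (kry y).det := by
  set A₀ := imM (blk0 y) with hA₀
  set a := imV (blkv y) with ha
  set S := Submodule.span ℝ (Set.range fun j : Fin n => A₀ ^ (j : ℕ) *ᵥ a) with hS
  -- Cayley–Hamilton: A₀^n *ᵥ a ∈ S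
  have hch := Matrix.aeval_self_charpoly A₀
  rw [Polynomial.aeval_eq_sum_range, Matrix.charpoly_natDegree_eq_dim, Fintype.card_fin,
    Finset.sum_range_succ] at hch
  have hcoeff : A₀.charpoly.coeff n = 1 := by
    have hm := A₀.charpoly_monic
    have h2 := hm.coeff_natDegree
    rwa [Matrix.charpoly_natDegree_eq_dim, Fintype.card_fin] at h2
  rw [hcoeff, one_smul] at hch
  have hAn : A₀ ^ n = -∑ i ∈ Finset.range n, A₀.charpoly.coeff i • A₀ ^ i :=
    eq_neg_of_add_eq_zero_right hch
  have hn : A₀ ^ n *ᵥ a ∈ S := by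
    rw [hAn, Matrix.neg_mulVec, sum_mulVec]
    refine S.neg_mem (Submodule.sum_mem _ fun i hi => ?_)
    rw [Matrix.smul_mulVec]
    refine S.smul_mem _ (Submodule.subset_span ⟨⟨i, Finset.mem_range.mp hi⟩, rfl⟩)
  have hSA : ∀ v ∈ S, A₀ *ᵥ v ∈ S := by
    intro v hv
    refine Submodule.span_induction ?_ ?_ ?_ ?_ hv
    · rintro x ⟨j, rfl⟩
      by_cases hj : (j : ℕ) + 1 < n
      · rw [Matrix.mulVec_mulVec, ← pow_succ']
        exact Submodule.subset_span ⟨⟨(j : ℕ) + 1, hj⟩, rfl⟩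
      · have hj2 : (j : ℕ) + 1 = n := by omega
        rw [Matrix.mulVec_mulVec, ← pow_succ', hj2]
        exact hn
    · simp
    · intro x z _ _ hx hz
      rw [Matrix.mulVec_add]; exact S.add_mem hx hz
    · intro c x _ hx
      rw [Matrix.mulVec_smul]; exact S.smul_mem c hx
  have hpowS : ∀ (m : ℕ), ∀ v ∈ S, A₀ ^ m *ᵥ v ∈ S := by
    intro m
    induction m with
    | zero => intro v hv; simpa using hv
    | succ m ih =>
      intro v hv
      rw [pow_succ, ← Matrix.mulVec_mulVec]
      exact ih _ (hSA v hv)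
  have hpow : ∀ k : ℕ, A₀ ^ k *ᵥ a ∈ S := by
    intro k
    by_cases hk : k < n
    · exact Submodule.subset_span ⟨⟨k, hk⟩, rfl⟩
    · have hksplit : A₀ ^ k = A₀ ^ (k - n) * A₀ ^ n := by
        rw [← pow_add]; congr 1; omega
      rw [hksplit, ← Matrix.mulVec_mulVec]
      exact hpowS _ _ hn
  have hS_top : S = ⊤ := by
    rw [eq_top_iff, ← hspan]
    rw [Submodule.span_le]
    rintro x ⟨k, rfl⟩
    exact hpow k
  -- columns of kry y span everything
  have htrans : (kry y)ᵀ = fun j : Fin n => A₀ ^ (j : ℕ) *ᵥ a := by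
    funext j i; rfl
  have hrange : LinearMap.range (Matrix.mulVecLin (kry y)) = ⊤ := by
    rw [Matrix.range_mulVecLin, show (kry y).col = fun j : Fin n => A₀ ^ (j : ℕ) *ᵥ a from htrans,
      ← hS, hS_top]
  have hsurj : Function.Surjective (kry y).mulVec := by
    intro v
    obtain ⟨x, hx⟩ := LinearMap.range_eq_top.mp hrange v
    exact ⟨x, hx⟩
  exact (Matrix.isUnit_iff_isUnit_det _).mp (Matrix.mulVec_surjective_iff_isUnit.mp hsurj)

lemma caseA_closed (y : Matrix (Fin (n+1)) (Fin (n+1)) ℂ)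
    (horb : IsRZClosed {z | ∃ g : GL (Fin n) ℝ, z = mact g y})
    (hK : IsUnit (kry y).det) :
    IsRZClosed {z | ∃ g ∈ BSub n, z = mact g y} := by
  obtain ⟨T₀, hT₀poly, hT₀⟩ := horb
  have hKK : kry y * (kry y)⁻¹ = 1 := Matrix.mul_nonsing_inv _ hK
  have hGf_mact : ∀ g : GL (Fin n) ℝ,
      kry (mact g y) * (kry y)⁻¹ = (g : Matrix (Fin n) (Fin n) ℝ) := by
    intro g
    rw [kry_mact, Matrix.mul_assoc, hKK, Matrix.mul_one]
  refine ⟨T₀ ∪ {f | ∃ p : Fin n × Fin n, p.2 < p.1 ∧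
      f = fun z => (kry z * (kry y)⁻¹) p.1 p.2}, ?_, ?_⟩
  · rintro f (hf | ⟨⟨i, j⟩, hij, rfl⟩)
    · exact hT₀poly f hf
    · have hrw : (fun z : Matrix (Fin (n+1)) (Fin (n+1)) ℂ => (kry z * (kry y)⁻¹) i j)
          = fun z => ∑ k : Fin n, kry z i k * (kry y)⁻¹ k j := by
        funext z; simp [Matrix.mul_apply]
      rw [hrw]
      exact isPolyFun_sum Finset.univ _ fun k _ =>
        isPolyFun_mul_const (isPolyFun_kry (k : ℕ) i) _
  · ext z
    simp only [Set.mem_setOf_eq, Set.mem_union]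
    constructor
    · rintro ⟨g, hgB, rfl⟩
      rintro f (hf | ⟨⟨i, j⟩, hij, rfl⟩)
      · have hz : mact g y ∈ {z | ∃ g : GL (Fin n) ℝ, z = mact g y} := ⟨g, rfl⟩
        rw [hT₀] at hz
        exact hz f hf
      · show (kry (mact g y) * (kry y)⁻¹) i j = 0
        rw [hGf_mact g]
        exact hgB hij
    · intro hz
      have hzG : z ∈ {z | ∃ g : GL (Fin n) ℝ, z = mact g y} := by
        rw [hT₀]; exact fun f hf => hz f (Or.inl hf)
      obtain ⟨g, rfl⟩ := hzG
      refine ⟨g, ?_, rfl⟩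
      intro i j hij
      have h2 := hz (fun z => (kry z * (kry y)⁻¹) i j) (Or.inr ⟨(i, j), hij, rfl⟩)
      have h3 : (kry (mact g y) * (kry y)⁻¹) i j = 0 := h2
      rwa [hGf_mact g] at h3

lemma reindex_blocks_add_smul (t : ℝ) (A A' : Matrix (Fin n) (Fin n) ℂ)
    (B B' : Matrix (Fin n) (Fin 1) ℂ) (C C' : Matrix (Fin 1) (Fin n) ℂ)
    (D D' : Matrix (Fin 1) (Fin 1) ℂ) :
    Matrix.reindex finSumFinEquiv finSumFinEquiv
        (Matrix.fromBlocks (A + t • A') (B + t • B') (C + t • C') (D + t • D'))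
      = Matrix.reindex finSumFinEquiv finSumFinEquiv (Matrix.fromBlocks A B C D)
        + t • Matrix.reindex finSumFinEquiv finSumFinEquiv (Matrix.fromBlocks A' B' C' D') := by
  ext i j
  simp only [Matrix.reindex_apply, Matrix.submatrix_apply, Matrix.add_apply, Matrix.smul_apply]
  cases h1 : finSumFinEquiv.symm i <;> cases h2 : finSumFinEquiv.symm j <;>
    simp [Matrix.fromBlocks]

lemma cMat_eta (B : Matrix (Fin n) (Fin 1) ℂ) : cMat (fun i => B i 0) = B := by
  ext i j
  have : j = 0 := Subsingleton.elim j 0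
  subst this
  rfl

lemma rMat_eta (C : Matrix (Fin 1) (Fin n) ℂ) : rMat (fun j => C 0 j) = C := by
  ext i j
  have : i = 0 := Subsingleton.elim i 0
  subst this
  rfl

lemma dMat_eta (D : Matrix (Fin 1) (Fin 1) ℂ) : dMat (D 0 0) = D := by
  ext i j
  have h1 : i = 0 := Subsingleton.elim i 0
  have h2 : j = 0 := Subsingleton.elim j 0
  subst h1; subst h2
  rfl

set_option maxHeartbeats 1600000 in
lemma span_top_of_RSdef (y : Matrix (Fin (n+1)) (Fin (n+1)) ℂ)
    (hy : y ∈ sSet n) (hrs : RSdef y) :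
    Submodule.span ℝ (Set.range fun k : ℕ => (imM (blk0 y)) ^ k *ᵥ imV (blkv y)) = ⊤ := by
  by_contra hW
  obtain ⟨hstab, T₀, hT₀poly, hT₀⟩ := hrs
  set A₀ := imM (blk0 y) with hA₀
  set a := imV (blkv y) with ha
  set W := Submodule.span ℝ (Set.range fun k : ℕ => A₀ ^ k *ᵥ a) with hWdef
  -- projection onto W
  obtain ⟨Cc, hCc⟩ := Submodule.exists_isCompl W
  set pl : (Fin n → ℝ) →ₗ[ℝ] (Fin n → ℝ) :=
    W.subtype ∘ₗ (W.linearProjOfIsCompl Cc hCc) with hpl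
  set Pm := LinearMap.toMatrix' pl with hPm
  have hPv : ∀ x, Pm *ᵥ x = pl x := by
    intro x
    rw [hPm, ← Matrix.toLin'_apply, Matrix.toLin'_toMatrix']
  have hplW : ∀ x, pl x ∈ W := fun x => ((W.linearProjOfIsCompl Cc hCc) x).2
  have hplid : ∀ x ∈ W, pl x = x := by
    intro x hx
    show (W.subtype ((W.projectionOnto Cc hCc) x)) = x
    rw [show x = ((⟨x, hx⟩ : W) : Fin n → ℝ) from rfl,
      Submodule.linearProjOfIsCompl_apply_left]
    rfl
  have haW : a ∈ W := Submodule.subset_span ⟨0, by simp⟩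
  have hAW : ∀ v ∈ W, A₀ *ᵥ v ∈ W := by
    intro v hv
    refine Submodule.span_induction ?_ ?_ ?_ ?_ hv
    · rintro x ⟨k, rfl⟩
      refine Submodule.subset_span ⟨k+1, ?_⟩
      show A₀ ^ (k+1) *ᵥ a = A₀ *ᵥ (A₀ ^ k *ᵥ a)
      rw [pow_succ', ← Matrix.mulVec_mulVec]
    · simp
    · intro x z _ _ hx hz
      rw [Matrix.mulVec_add]; exact W.add_mem hx hz
    · intro c x _ hx
      rw [Matrix.mulVec_smul]; exact W.smul_mem c hx
  set Qm : Matrix (Fin n) (Fin n) ℝ := 1 - Pm with hQm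
  have hPP : Pm * Pm = Pm := by
    apply matrix_ext_mulVec
    intro x
    rw [← Matrix.mulVec_mulVec, hPv, hPv, hplid _ (hplW x)]
  have hAP : Pm * (A₀ * Pm) = A₀ * Pm := by
    apply matrix_ext_mulVec
    intro x
    have h1 : (A₀ * Pm) *ᵥ x = A₀ *ᵥ (Pm *ᵥ x) := (Matrix.mulVec_mulVec x A₀ Pm).symm
    have h2 : A₀ *ᵥ (Pm *ᵥ x) ∈ W := hAW _ (by rw [hPv]; exact hplW x)
    rw [← Matrix.mulVec_mulVec, h1, hPv, hplid _ h2]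
  have hQAP : Qm * A₀ * Pm = 0 := by
    have hexp : Qm * A₀ * Pm = A₀ * Pm - Pm * (A₀ * Pm) := by
      rw [hQm]; noncomm_ring
    rw [hexp, hAP, sub_self]
  have hPa : Pm *ᵥ a = a := by rw [hPv]; exact hplid a haW
  have hQa : Qm *ᵥ a = 0 := by
    rw [hQm, Matrix.sub_mulVec, Matrix.one_mulVec, hPa, sub_self]
  have hPQ : Pm * Qm = 0 := by rw [hQm, Matrix.mul_sub, Matrix.mul_one, hPP, sub_self]
  have hQP : Qm * Pm = 0 := by rw [hQm, Matrix.sub_mul, Matrix.one_mul, hPP, sub_self]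
  have hQQ : Qm * Qm = Qm := by
    have hexp : Qm * Qm = Qm - Pm * Qm := by rw [hQm]; noncomm_ring
    rw [hexp, hPQ, sub_zero]
  have hmulgen : ∀ s t : ℝ, (Pm + s • Qm) * (Pm + t • Qm) = Pm + (s * t) • Qm := by
    intro s t
    simp only [Matrix.add_mul, Matrix.mul_add, mul_smul_comm, smul_mul_assoc,
      hPP, hPQ, hQP, hQQ, smul_smul, smul_zero, add_zero, zero_add, mul_comm s t]
  have hone : Pm + (1:ℝ) • Qm = 1 := by rw [one_smul, hQm]; abel
  have hinv : ∀ t : ℝ, t ≠ 0 → (Pm + t • Qm) * (Pm + t⁻¹ • Qm) = 1 := by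
    intro t ht; rw [hmulgen, mul_inv_cancel₀ ht, hone]
  let GtU : (t : ℝ) → t ≠ 0 → GL (Fin n) ℝ := fun t ht =>
    ⟨Pm + t • Qm, Pm + t⁻¹ • Qm, hinv t ht, by
      have h2 := hinv t⁻¹ (inv_ne_zero ht); rwa [inv_inv] at h2⟩
  have hval : ∀ (t : ℝ) (ht : t ≠ 0),
      ((GtU t ht : GL (Fin n) ℝ) : Matrix (Fin n) (Fin n) ℝ) = Pm + t • Qm :=
    fun t ht => rfl
  have hival : ∀ (t : ℝ) (ht : t ≠ 0),
      (((GtU t ht)⁻¹ : GL (Fin n) ℝ) : Matrix (Fin n) (Fin n) ℝ) = Pm + t⁻¹ • Qm :=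
    fun t ht => rfl
  -- complex versions
  set cP := ι Pm with hcP
  set cQ := ι Qm with hcQ
  have hcPP : cP * cP = cP := by rw [hcP, ← ι_mul, hPP]
  have hcPQ : cP * cQ = 0 := by rw [hcP, hcQ, ← ι_mul, hPQ, ι_zero]
  have hcQP : cQ * cP = 0 := by rw [hcP, hcQ, ← ι_mul, hQP, ι_zero]
  have hcQQ : cQ * cQ = cQ := by rw [hcQ, ← ι_mul, hQQ]
  have hPP' : ∀ X : Matrix (Fin n) (Fin n) ℂ, cP * (cP * X) = cP * X := fun X => by
    rw [← Matrix.mul_assoc, hcPP]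
  have hPQ' : ∀ X : Matrix (Fin n) (Fin n) ℂ, cP * (cQ * X) = 0 := fun X => by
    rw [← Matrix.mul_assoc, hcPQ, Matrix.zero_mul]
  have hQP' : ∀ X : Matrix (Fin n) (Fin n) ℂ, cQ * (cP * X) = 0 := fun X => by
    rw [← Matrix.mul_assoc, hcQP, Matrix.zero_mul]
  have hQQ' : ∀ X : Matrix (Fin n) (Fin n) ℂ, cQ * (cQ * X) = cQ * X := fun X => by
    rw [← Matrix.mul_assoc, hcQQ]
  -- realness of y
  have hy' : y + y.map (starRingEnd ℂ) = 0 := hy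
  have hentry : ∀ i j, y i j = Complex.I * ((y i j).im : ℂ) := by
    intro i j
    apply entry_real
    have h2 := Matrix.ext_iff.2 hy' i j
    simpa [Matrix.add_apply, Matrix.map_apply] using h2
  set y0 := blk0 y with hy0def
  have hy0 : y0 = Complex.I • ι A₀ := by
    ext i j
    simp only [Matrix.smul_apply, ι, Matrix.map_apply, smul_eq_mul]
    exact hentry _ _
  have hQy0P : cQ * (y0 * cP) = 0 := by
    rw [hy0, Matrix.smul_mul, Matrix.mul_smul, hcQ, hcP, ← Matrix.mul_assoc, ← ι_mul, ← ι_mul]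
    rw [show Qm * A₀ * Pm = 0 from hQAP, ι_zero, smul_zero]
  have hQy0P' : ∀ X : Matrix (Fin n) (Fin n) ℂ, cQ * (y0 * (cP * X)) = 0 := fun X => by
    rw [show y0 * (cP * X) = (y0 * cP) * X from (Matrix.mul_assoc _ _ _).symm,
      ← Matrix.mul_assoc, hQy0P, Matrix.zero_mul]
  -- column realness
  set vC := cMat (blkv y) with hvC
  have hventry : ∀ k, blkv y k = Complex.I * ((a k : ℝ) : ℂ) := fun k => hentry _ _
  have hcol : ∀ R : Matrix (Fin n) (Fin n) ℝ,
      ι R * vC = cMat (fun i => Complex.I * (((R *ᵥ a) i : ℝ) : ℂ)) := by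
    intro R
    ext i j
    simp only [Matrix.mul_apply, cMat, Matrix.of_apply, ι, Matrix.map_apply]
    calc ∑ k, (((R i k : ℝ) : ℂ)) * blkv y k
        = ∑ k, Complex.I * ((R i k * a k : ℝ) : ℂ) := by
          refine Finset.sum_congr rfl fun k _ => ?_
          rw [hventry k]; push_cast; ring
      _ = Complex.I * ((∑ k, R i k * a k : ℝ) : ℂ) := by
          push_cast
          rw [Finset.mul_sum]
      _ = _ := rfl
  have hPvC : cP * vC = vC := by
    rw [hcP, hcol, hPa]
    ext i j
    simp only [cMat, Matrix.of_apply]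
    exact (hventry i).symm
  have hQvC : cQ * vC = 0 := by
    rw [hcQ, hcol, hQa]
    ext i j
    simp [cMat]
  -- blocks
  set wR := rMat (blkw y) with hwR
  set dD := dMat (blkd y) with hdD
  set C0 := cP * (y0 * cP) + cQ * (y0 * cQ) with hC0
  set C1 := cP * (y0 * cQ) with hC1
  set W0 := wR * cP with hW0
  set W1 := wR * cQ with hW1
  set Z₀ := Matrix.reindex finSumFinEquiv finSumFinEquiv
      (Matrix.fromBlocks C0 vC W0 dD) with hZ₀
  set Z₁ := Matrix.reindex finSumFinEquiv finSumFinEquiv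
      (Matrix.fromBlocks C1 0 W1 0) with hZ₁
  have hι : ∀ t : ℝ, ι (Pm + t • Qm) = cP + t • cQ := fun t => by
    rw [ι_add, ι_smul, hcP, hcQ]
  -- the rational curve in the orbit
  have hcurve : ∀ (t : ℝ) (ht : t ≠ 0), mact (GtU t ht) y = Z₀ + t⁻¹ • Z₁ := by
    intro t ht
    rw [mact_eq, dgC_mul_dgC, hval t ht, hival t ht, hι, hι]
    have hblk0 : (cP + t • cQ) * blk0 y * (cP + t⁻¹ • cQ) = C0 + t⁻¹ • C1 := by
      rw [← hy0def]
      simp only [Matrix.add_mul, Matrix.mul_add, smul_mul_assoc, mul_smul_comm,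
        Matrix.mul_assoc, smul_smul]
      rw [hQy0P]
      rw [smul_zero, add_zero, smul_add, smul_smul, inv_mul_cancel₀ ht, one_smul, hC0, hC1]
      abel
    have hblkv : (cP + t • cQ) * cMat (blkv y) = vC := by
      rw [← hvC, Matrix.add_mul, hPvC, Matrix.smul_mul, hQvC, smul_zero, add_zero]
    have hblkw : rMat (blkw y) * (cP + t⁻¹ • cQ) = W0 + t⁻¹ • W1 := by
      rw [← hwR, Matrix.mul_add, Matrix.mul_smul, hW0, hW1]
    rw [hblk0, hblkv, hblkw, ← hdD]
    rw [show vC = vC + t⁻¹ • (0 : Matrix (Fin n) (Fin 1) ℂ) by rw [smul_zero, add_zero],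
      show dD = dD + t⁻¹ • (0 : Matrix (Fin 1) (Fin 1) ℂ) by rw [smul_zero, add_zero]]
    rw [reindex_blocks_add_smul]
  -- the limit point is fixed by GtU 2
  have h2ne : (2:ℝ) ≠ 0 := two_ne_zero
  have hstabZ : mact (GtU 2 h2ne) Z₀ = Z₀ := by
    rw [mact_eq, dgC_mul_dgC, hval 2 h2ne, hival 2 h2ne, hι, hι]
    have hb0 : blk0 Z₀ = C0 := by rw [hZ₀, blk0_reindex]
    have hbv : cMat (blkv Z₀) = vC := by rw [hZ₀, blkv_reindex, cMat_eta]
    have hbw : rMat (blkw Z₀) = W0 := by rw [hZ₀, blkw_reindex, rMat_eta]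
    have hbd : dMat (blkd Z₀) = dD := by rw [hZ₀, blkd_reindex, dMat_eta]
    rw [hb0, hbv, hbw, hbd]
    have hc0 : (cP + (2:ℝ) • cQ) * C0 * (cP + (2:ℝ)⁻¹ • cQ) = C0 := by
      rw [hC0]
      simp only [Matrix.add_mul, Matrix.mul_add, smul_mul_assoc, mul_smul_comm,
        Matrix.mul_assoc, smul_smul, hPP', hPQ', hQP', hQQ', hcPP, hcPQ, hcQP, hcQQ,
        Matrix.mul_zero, Matrix.zero_mul, smul_zero, add_zero, zero_add]
      norm_num
    have hcv : (cP + (2:ℝ) • cQ) * vC = vC := by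
      rw [Matrix.add_mul, hPvC, Matrix.smul_mul, hQvC, smul_zero, add_zero]
    have hcw : W0 * (cP + (2:ℝ)⁻¹ • cQ) = W0 := by
      rw [hW0, Matrix.mul_add, Matrix.mul_smul, Matrix.mul_assoc, Matrix.mul_assoc,
        hcPP, hcPQ, Matrix.mul_zero, smul_zero, add_zero]
    rw [hc0, hcv, hcw, hZ₀]
  -- Z₀ is in the Zariski closure of the orbit, hence in the orbit
  have hZ₀orb : ∃ h : GL (Fin n) ℝ, Z₀ = mact h y := by
    have hmem : Z₀ ∈ {z | ∃ g : GL (Fin n) ℝ, z = mact g y} := by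
      rw [hT₀]
      intro f hf
      have hline := isPolyFun_line_continuous (hT₀poly f hf) Z₀ Z₁
      have hzero : ∀ s : ℝ, s ≠ 0 → f (Z₀ + s • Z₁) = 0 := by
        intro s hs
        have horbmem : Z₀ + s • Z₁ ∈ {z | ∃ g : GL (Fin n) ℝ, z = mact g y} := by
          refine ⟨GtU s⁻¹ (inv_ne_zero hs), ?_⟩
          rw [hcurve s⁻¹ (inv_ne_zero hs), inv_inv]
        rw [hT₀] at horbmem
        exact horbmem f hf
      have hclosed : IsClosed {s : ℝ | f (Z₀ + s • Z₁) = 0} :=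
        isClosed_eq hline continuous_const
      have hsub : ({(0:ℝ)}ᶜ : Set ℝ) ⊆ {s : ℝ | f (Z₀ + s • Z₁) = 0} :=
        fun s hs => hzero s hs
      have h0mem : (0:ℝ) ∈ closure ({(0:ℝ)}ᶜ : Set ℝ) := by
        rw [(dense_compl_singleton (0:ℝ)).closure_eq]; trivial
      have h0 : f (Z₀ + (0:ℝ) • Z₁) = 0 := closure_minimal hsub hclosed h0mem
      simpa using h0
    exact hmem
  obtain ⟨h, hh⟩ := hZ₀orb
  -- conjugated stabilizer element
  have hfix : mact ((h⁻¹ * GtU 2 h2ne) * h) y = y := by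
    rw [mact_mul, mact_mul, ← hh, hstabZ, hh, ← mact_mul, inv_mul_cancel, mact_one]
  have h1 : (h⁻¹ * GtU 2 h2ne) * h = 1 := hstab _ hfix
  have hs2 : GtU 2 h2ne = 1 := by
    have hrw : GtU 2 h2ne = h * ((h⁻¹ * GtU 2 h2ne) * h) * h⁻¹ := by group
    rw [hrw, h1]; group
  have hQm0 : Qm = (0 : Matrix (Fin n) (Fin n) ℝ) := by
    have hval2 : Pm + (2:ℝ) • Qm = 1 := by
      have h3 := congrArg (fun u : GL (Fin n) ℝ => (u : Matrix (Fin n) (Fin n) ℝ)) hs2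
      simpa [hval 2 h2ne] using h3
    have heq : Pm + (2:ℝ) • Qm = Pm + (1:ℝ) • Qm := hval2.trans hone.symm
    have h2 : (2:ℝ) • Qm = (1:ℝ) • Qm := add_left_cancel heq
    have h3 : ((2:ℝ) - 1) • Qm = 0 := by rw [sub_smul, h2, sub_self]
    norm_num at h3
    exact h3
  apply hW
  rw [Submodule.eq_top_iff']
  intro x
  have hPx : Pm *ᵥ x = x := by
    have h5 : Qm *ᵥ x = 0 := by rw [hQm0, Matrix.zero_mulVec]
    rw [hQm, Matrix.sub_mulVec, Matrix.one_mulVec, sub_eq_zero] at h5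
    exact h5.symm
  rw [← hPx, hPv]
  exact hplW x

end Stmt19Aux

open Stmt19Aux in
/-- for regular semi-simple `y ∈ s_{n+1}`, the `B`-stabilizer of `y`
is trivial, the orbit map `B → s_{n+1}`, `b ↦ b·y`, is injective, and its image is
Zariski closed. -/
theorem stmt19 (n : ℕ) (y : Matrix (Fin (n+1)) (Fin (n+1)) ℂ)
    (hy : y ∈ sSet n) (hrs : RSdef y) :
    (∀ g ∈ BSub n, mact g y = y → g = 1) ∧
    (∀ g ∈ BSub n, ∀ g' ∈ BSub n, mact g y = mact g' y → g = g') ∧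
    IsRZClosed {z | ∃ g ∈ BSub n, z = mact g y} := by
  obtain ⟨hstab, horbC⟩ := hrs
  refine ⟨fun g _ h => hstab g h, ?_, ?_⟩
  · intro g _ g' _ hgg
    have h1 : mact (g'⁻¹ * g) y = y := by
      rw [mact_mul, hgg, ← mact_mul, inv_mul_cancel, mact_one]
    exact (inv_mul_eq_one.mp (hstab _ h1)).symm
  · have hspan := span_top_of_RSdef y hy ⟨hstab, horbC⟩
    exact caseA_closed y horbC (kry_isUnit y hspan)

end
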